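/- arXiv:1807.08950 — 7 statements merged into one kernel-verified Lean document; each statement's English description precedes it below -/
import Mathlib

section
/- Let 𝔖 = (X, 𝒰, φ) be a dynamical system with inputs, and suppose that either 𝒰 ⊆ L^p([0,∞), U) for some p ∈ [1,∞) with ‖·‖_𝒰 = ‖·‖_{L^p}, or 𝒰 ⊆ L^∞_0([0,∞), U) := { u ∈ L^∞([0,∞),U) : ‖u(·+t)‖_∞ → 0 as t → ∞ } with ‖·‖_𝒰 = ‖·‖_{L^∞}, where U is a Banach space. If 𝔖 is of weak asymptotic gain (i.e., of weak asymptotic gain γ̄ for some γ̄ ∈ 𝒦 ∪ {0}), then 𝔖 is of weak asymptotic gain 0. -/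
open MeasureTheory Filter Set Topology
open scoped ENNReal NNReal

noncomputable section

/-- The class `𝒦` of comparison functions: continuous, strictly increasing functions
`γ : [0,∞) → [0,∞)` with `γ 0 = 0` (modelled on `ℝ` via conditions on `Ici 0`). -/
def ClassK (γ : ℝ → ℝ) : Prop :=
  ContinuousOn γ (Ici 0) ∧ StrictMonoOn γ (Ici 0) ∧ γ 0 = 0 ∧ ∀ r : ℝ, 0 ≤ r → 0 ≤ γ r

/-- The class `𝒦 ∪ {0}`. -/
def ClassKZero (γ : ℝ → ℝ) : Prop := ClassK γ ∨ ∀ r : ℝ, γ r = 0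

/-- The class `ℒ` of comparison functions: continuous, strictly decreasing functions
`β : [0,∞) → [0,∞)` with `β r → 0` as `r → ∞`. -/
def ClassL (β : ℝ → ℝ) : Prop :=
  ContinuousOn β (Ici 0) ∧ StrictAntiOn β (Ici 0) ∧ (∀ r : ℝ, 0 ≤ r → 0 ≤ β r) ∧
    Tendsto β atTop (nhds 0)

/-- A (forward-complete) dynamical system with inputs `𝔖 = (X, 𝒰, φ)`. Inputs are
functions `u : ℝ → U` (only the values on `[0,∞)` matter), `inNorm` is the norm `‖·‖_𝒰`. -/
structure DynSysWithInputs (X : Type*) [NormedAddCommGroup X] (U : Type*) where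
  inputs : Set (ℝ → U)
  inputs_nonempty : inputs.Nonempty
  inNorm : (ℝ → U) → ℝ
  inNorm_nonneg : ∀ u ∈ inputs, 0 ≤ inNorm u
  flow : ℝ → X → (ℝ → U) → X
  shift_mem : ∀ u ∈ inputs, ∀ τ : ℝ, 0 ≤ τ → (fun s => u (s + τ)) ∈ inputs
  shift_norm_le : ∀ u ∈ inputs, ∀ τ : ℝ, 0 ≤ τ → inNorm (fun s => u (s + τ)) ≤ inNorm u
  concat_mem : ∀ u₁ ∈ inputs, ∀ u₂ ∈ inputs, ∀ τ : ℝ, 0 ≤ τ →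
    (fun s => if s < τ then u₁ s else u₂ (s - τ)) ∈ inputs
  flow_zero : ∀ (x₀ : X), ∀ u ∈ inputs, flow 0 x₀ u = x₀
  cocycle : ∀ (x₀ : X), ∀ u ∈ inputs, ∀ s t : ℝ, 0 ≤ s → 0 ≤ t →
    flow (t + s) x₀ u = flow t (flow s x₀ u) (fun r => u (r + s))
  flow_continuous : ∀ (x₀ : X), ∀ u ∈ inputs, ContinuousOn (fun t => flow t x₀ u) (Ici 0)
  causal : ∀ (x₀ : X), ∀ u₁ ∈ inputs, ∀ u₂ ∈ inputs, ∀ τ : ℝ, 0 ≤ τ →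
    (∀ s ∈ Icc (0:ℝ) τ, u₁ s = u₂ s) → ∀ t ∈ Icc (0:ℝ) τ, flow t x₀ u₁ = flow t x₀ u₂

variable {X U : Type*} [NormedAddCommGroup X]

/-- Uniform global stability with explicit gains `σ`, `γ`. -/
def UGSWith (S : DynSysWithInputs X U) (σ γ : ℝ → ℝ) : Prop :=
  ∀ (x₀ : X), ∀ u ∈ S.inputs, ∀ t : ℝ, 0 ≤ t →
    ‖S.flow t x₀ u‖ ≤ σ ‖x₀‖ + γ (S.inNorm u)

/-- Uniform global stability. -/
def UGS (S : DynSysWithInputs X U) : Prop :=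
  ∃ σ γ : ℝ → ℝ, ClassK σ ∧ ClassK γ ∧ UGSWith S σ γ

/-- The weak asymptotic gain property with gain `γ`. -/
def WeakAGWith (S : DynSysWithInputs X U) (γ : ℝ → ℝ) : Prop :=
  ∀ ε : ℝ, 0 < ε → ∀ (x₀ : X), ∀ u ∈ S.inputs, ∃ τ : ℝ, 0 ≤ τ ∧
    ∀ t : ℝ, τ ≤ t → ‖S.flow t x₀ u‖ ≤ ε + γ (S.inNorm u)

/-- The weak asymptotic gain property (for some gain in `𝒦 ∪ {0}`). -/
def WeakAG (S : DynSysWithInputs X U) : Prop :=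
  ∃ γ : ℝ → ℝ, ClassKZero γ ∧ WeakAGWith S γ

/-- The strong asymptotic gain property with gain `γ`. -/
def StrongAGWith (S : DynSysWithInputs X U) (γ : ℝ → ℝ) : Prop :=
  ∀ ε : ℝ, 0 < ε → ∀ (x₀ : X), ∃ τ : ℝ, 0 ≤ τ ∧
    ∀ t : ℝ, τ ≤ t → ∀ u ∈ S.inputs, ‖S.flow t x₀ u‖ ≤ ε + γ (S.inNorm u)

/-- The strong asymptotic gain property. -/
def StrongAG (S : DynSysWithInputs X U) : Prop :=
  ∃ γ : ℝ → ℝ, ClassKZero γ ∧ StrongAGWith S γ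

/-- The uniform asymptotic gain property with gain `γ`. -/
def UniformAGWith (S : DynSysWithInputs X U) (γ : ℝ → ℝ) : Prop :=
  ∀ ε : ℝ, 0 < ε → ∀ r : ℝ, 0 < r → ∃ τ : ℝ, 0 ≤ τ ∧
    ∀ t : ℝ, τ ≤ t → ∀ (x₀ : X), ‖x₀‖ ≤ r → ∀ u ∈ S.inputs,
      ‖S.flow t x₀ u‖ ≤ ε + γ (S.inNorm u)

/-- The uniform asymptotic gain property. -/
def UniformAG (S : DynSysWithInputs X U) : Prop :=
  ∃ γ : ℝ → ℝ, ClassKZero γ ∧ UniformAGWith S γ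

/-- The weak limit property with gain `γ`. -/
def WeakLimitWith (S : DynSysWithInputs X U) (γ : ℝ → ℝ) : Prop :=
  ∀ ε : ℝ, 0 < ε → ∀ (x₀ : X), ∀ u ∈ S.inputs, ∃ τ : ℝ, 0 ≤ τ ∧
    sInf ((fun t => ‖S.flow t x₀ u‖) '' Icc (0:ℝ) τ) ≤ ε + γ (S.inNorm u)

/-- The weak limit property. -/
def WeakLimit (S : DynSysWithInputs X U) : Prop :=
  ∃ γ : ℝ → ℝ, ClassK γ ∧ WeakLimitWith S γ

/-- Weak input-to-state stability. -/
def WeakISS (S : DynSysWithInputs X U) : Prop := UGS S ∧ WeakAG S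

/-- Strong input-to-state stability. -/
def StrongISS (S : DynSysWithInputs X U) : Prop := UGS S ∧ StrongAG S

/-- Uniform input-to-state stability. -/
def UniformISS (S : DynSysWithInputs X U) : Prop := UGS S ∧ UniformAG S

/-! For an input in `L^p` (`p < ∞`) or in `L^∞₀`, the norm of the tail `u(· + τ)` tends to `0`
as `τ → ∞`. Restarting the system at such a time `τ` from the state `φ(τ, x₀, u)` with the tail
as input, the weak asymptotic gain gives the eventual bound `ε/2 + γ(‖u(· + τ)‖_𝒰) ≤ ε`, because
`γ` is continuous at `0` with `γ 0 = 0`. -/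

section Tails

variable {α E : Type*} [LinearOrder α] [NoMaxOrder α] [Nonempty α] [TopologicalSpace α]
  [OrderClosedTopology α] [MeasurableSpace α] [OpensMeasurableSpace α]
  [(atTop : Filter α).IsCountablyGenerated] {μ : Measure α}

theorem tendsto_setLIntegral_Ici_atTop {g : α → ℝ≥0∞} (hg : ∫⁻ x, g x ∂μ ≠ ∞) :
    Tendsto (fun a => ∫⁻ x in Ici a, g x ∂μ) atTop (𝓝 0) := by
  have hIci : ∀ a, μ.withDensity g (Ici a) = ∫⁻ x in Ici a, g x ∂μ :=
    fun a => withDensity_apply g measurableSet_Ici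
  have hempty : ⋂ a : α, Ici a = ∅ :=
    eq_empty_of_forall_notMem fun x hx => (exists_gt x).elim fun b hb =>
      (mem_iInter.1 hx b).not_gt hb
  have hfin : ∃ a : α, μ.withDensity g (Ici a) ≠ ∞ :=
    ⟨Classical.arbitrary α,
      ne_top_of_le_ne_top hg (by rw [hIci]; exact setLIntegral_le_lintegral _ _)⟩
  simpa [hIci, hempty, Function.comp_def] using
    tendsto_measure_iInter_atTop (fun a => measurableSet_Ici.nullMeasurableSet) antitone_Ici hfin

theorem tendsto_eLpNorm_restrict_Ici_atTop [NormedAddCommGroup E] {f : α → E} {p : ℝ≥0∞}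
    (hp : p ≠ ∞) (hf : eLpNorm f p μ ≠ ∞) :
    Tendsto (fun a => eLpNorm f p (μ.restrict (Ici a))) atTop (𝓝 0) := by
  rcases eq_or_ne p 0 with rfl | hp0
  · simp
  simp_rw [eLpNorm_eq_lintegral_rpow_enorm_toReal hp0 hp]
  have hint := lintegral_rpow_enorm_lt_top_of_eLpNorm_lt_top hp0 hp hf.lt_top
  have := (ENNReal.continuous_rpow_const (y := 1 / p.toReal)).tendsto 0 |>.comp
    (tendsto_setLIntegral_Ici_atTop hint.ne)
  rwa [ENNReal.zero_rpow_of_pos (one_div_pos.2 (ENNReal.toReal_pos hp0 hp))] at this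

end Tails

theorem eLpNorm_comp_add_right_restrict_Ici {E : Type*} [NormedAddCommGroup E] (u : ℝ → E)
    (p : ℝ≥0∞) (τ : ℝ) :
    eLpNorm (fun s => u (s + τ)) p (volume.restrict (Ici 0)) =
      eLpNorm u p (volume.restrict (Ici τ)) := by
  have hshift :
      MeasurePreserving (· + τ) (volume.restrict (Ici 0)) (volume.restrict (Ici τ)) := by
    simpa using
      (measurePreserving_add_right volume τ).restrict_preimage (measurableSet_Ici (a := τ))
  rw [← hshift.map_eq, (measurableEmbedding_addRight τ).eLpNorm_map_measure]
  rfl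

theorem tendsto_eLpNorm_comp_add_right_atTop {E : Type*} [NormedAddCommGroup E] {u : ℝ → E}
    {p : ℝ≥0∞} (hp : p ≠ ∞) (hu : eLpNorm u p (volume.restrict (Ici 0)) ≠ ∞) :
    Tendsto (fun τ => eLpNorm (fun s => u (s + τ)) p (volume.restrict (Ici 0))) atTop (𝓝 0) := by
  refine (tendsto_eLpNorm_restrict_Ici_atTop hp hu).congr' ?_
  filter_upwards [eventually_ge_atTop 0] with τ hτ
  rw [eLpNorm_comp_add_right_restrict_Ici, Measure.restrict_restrict measurableSet_Ici,
    Ici_inter_Ici, max_eq_left hτ]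

theorem ClassKZero.tendsto_nhdsWithin_Ici_zero {γ : ℝ → ℝ} (hγ : ClassKZero γ) :
    Tendsto γ (𝓝[Ici 0] 0) (𝓝 0) := by
  rcases hγ with ⟨hcont, -, hγ0, -⟩ | hzero
  · simpa only [ContinuousWithinAt, hγ0] using hcont 0 self_mem_Ici
  · rw [show γ = fun _ => 0 from funext hzero]
    exact tendsto_const_nhds

namespace DynSysWithInputs

variable (S : DynSysWithInputs X U)

theorem flow_eq_flow_shift {x₀ : X} {u : ℝ → U} (hu : u ∈ S.inputs) {τ t : ℝ} (hτ : 0 ≤ τ)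
    (ht : τ ≤ t) :
    S.flow t x₀ u = S.flow (t - τ) (S.flow τ x₀ u) (fun s => u (s + τ)) := by
  simpa using S.cocycle x₀ u hu τ (t - τ) hτ (sub_nonneg.2 ht)

theorem weakAGWith_zero_of_tendsto_inNorm_shift {γ : ℝ → ℝ} (hγ : Tendsto γ (𝓝[Ici 0] 0) (𝓝 0))
    (htail : ∀ u ∈ S.inputs, Tendsto (fun τ => S.inNorm fun s => u (s + τ)) atTop (𝓝 0))
    (hAG : WeakAGWith S γ) : WeakAGWith S fun _ => 0 := by
  intro ε hε x₀ u hu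
  have htail' : Tendsto (fun τ => S.inNorm fun s => u (s + τ)) atTop (𝓝[Ici 0] 0) :=
    tendsto_nhdsWithin_iff.2 ⟨htail u hu, (eventually_ge_atTop 0).mono fun τ hτ =>
      S.inNorm_nonneg _ (S.shift_mem u hu τ hτ)⟩
  obtain ⟨τ₁, hτ₁, hγτ₁⟩ := ((eventually_ge_atTop 0).and
    ((hγ.comp htail').eventually_lt_const (half_pos hε))).exists
  obtain ⟨τ₂, hτ₂, hbound⟩ :=
    hAG (ε / 2) (half_pos hε) (S.flow τ₁ x₀ u) _ (S.shift_mem u hu τ₁ hτ₁)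
  refine ⟨τ₁ + τ₂, by positivity, fun t ht => ?_⟩
  rw [S.flow_eq_flow_shift hu hτ₁ (by linarith)]
  have := hbound (t - τ₁) (by linarith)
  simp only [Function.comp_apply] at hγτ₁
  linarith

end DynSysWithInputs

theorem weakAG_implies_weakAG_zero_general
    [NormedAddCommGroup U]
    (S : DynSysWithInputs X U)
    (hU : (∃ p : ℝ≥0∞, 1 ≤ p ∧ p ≠ ⊤ ∧ ∀ u ∈ S.inputs,
            MemLp u p (volume.restrict (Ici (0:ℝ))) ∧
            S.inNorm u = (eLpNorm u p (volume.restrict (Ici (0:ℝ)))).toReal) ∨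
          (∀ u ∈ S.inputs,
            MemLp u ⊤ (volume.restrict (Ici (0:ℝ))) ∧
            Tendsto (fun t : ℝ =>
                (eLpNorm (fun s => u (s + t)) ⊤ (volume.restrict (Ici (0:ℝ)))).toReal)
              atTop (nhds 0) ∧
            S.inNorm u = (eLpNorm u ⊤ (volume.restrict (Ici (0:ℝ)))).toReal))
    (h : WeakAG S) :
    WeakAGWith S (fun _ => 0) := by
  obtain ⟨γ, hγ, hAG⟩ := h
  refine S.weakAGWith_zero_of_tendsto_inNorm_shift hγ.tendsto_nhdsWithin_Ici_zero ?_ hAG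
  intro u hu
  rcases hU with ⟨p, -, hp, hLp⟩ | hLinf
  · refine ((ENNReal.tendsto_toReal ENNReal.zero_ne_top).comp
      (tendsto_eLpNorm_comp_add_right_atTop hp (hLp u hu).1.eLpNorm_ne_top)).congr' ?_
    filter_upwards [eventually_ge_atTop 0] with τ hτ
    exact (hLp _ (S.shift_mem u hu τ hτ)).2.symm
  · refine (hLinf u hu).2.1.congr' ?_
    filter_upwards [eventually_ge_atTop 0] with τ hτ
    exact (hLinf _ (S.shift_mem u hu τ hτ)).2.2.symm

/-- If the input space of a dynamical system with inputs is contained in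
`L^p([0,∞),U)` for some `p ∈ [1,∞)` (with `‖·‖_𝒰 = ‖·‖_{L^p}`), or in
`L^∞₀([0,∞),U) = {u ∈ L^∞ : ‖u(·+t)‖_∞ → 0}` (with `‖·‖_𝒰 = ‖·‖_{L^∞}`), then
weak asymptotic gain implies weak asymptotic gain `0`. -/
theorem weakAG_implies_weakAG_zero
    [NormedAddCommGroup U] [CompleteSpace U]
    (S : DynSysWithInputs X U)
    (hU : (∃ p : ℝ≥0∞, 1 ≤ p ∧ p ≠ ⊤ ∧ ∀ u ∈ S.inputs,
            MemLp u p (volume.restrict (Ici (0:ℝ))) ∧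
            S.inNorm u = (eLpNorm u p (volume.restrict (Ici (0:ℝ)))).toReal) ∨
          (∀ u ∈ S.inputs,
            MemLp u ⊤ (volume.restrict (Ici (0:ℝ))) ∧
            Tendsto (fun t : ℝ =>
                (eLpNorm (fun s => u (s + t)) ⊤ (volume.restrict (Ici (0:ℝ)))).toReal)
              atTop (nhds 0) ∧
            S.inNorm u = (eLpNorm u ⊤ (volume.restrict (Ici (0:ℝ)))).toReal))
    (h : WeakAG S) :
    WeakAGWith S (fun _ => 0) :=
  weakAG_implies_weakAG_zero_general S hU h
end
end

section
/- Let 𝔖 = (X, 𝒰, φ) be a dynamical system with inputs. If 𝔖 is uniformly globally stable and has the weak limit property, then 𝔖 is uniformly globally stable and has the weak asymptotic gain property. Moreover, if σ̲, γ̲ ∈ 𝒦 witness the uniform global stability and γ̄ ∈ 𝒦 witnesses the weak limit property, then γ(r) := σ̲(2γ̄(r)) + γ̲(r) is a weak asymptotic gain for 𝔖. -/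
open MeasureTheory Filter Set Topology
open scoped ENNReal NNReal

noncomputable section

variable {X U : Type*} [NormedAddCommGroup X]

/-! The weak limit property brings the trajectory, at some time `t₁`, arbitrarily close to the
ball of radius `γ̄ ‖u‖`. Restarting the system at `t₁` (cocycle property, shifted input of no
larger norm) and applying uniform global stability bounds the state for all `t ≥ t₁` by
`σ̲ (γ̄ ‖u‖ + δ) + γ̲ ‖u‖`, which continuity of `σ̲` pushes below `ε + σ̲ (γ̄ ‖u‖) + γ̲ ‖u‖`. -/

namespace ClassK

variable {σ γ : ℝ → ℝ}

theorem nonneg (hγ : ClassK γ) {r : ℝ} (hr : 0 ≤ r) : 0 ≤ γ r := hγ.2.2.2 r hr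

theorem monotoneOn (hγ : ClassK γ) : MonotoneOn γ (Ici 0) := hγ.2.1.monotoneOn

theorem comp (hσ : ClassK σ) (hγ : ClassK γ) : ClassK (σ ∘ γ) := by
  have hmaps : MapsTo γ (Ici 0) (Ici 0) := fun _ hr => hγ.nonneg hr
  refine ⟨hσ.1.comp hγ.1 hmaps, hσ.2.1.comp hγ.2.1 hmaps, ?_,
    fun r hr => hσ.nonneg (hγ.nonneg hr)⟩
  simp [hγ.2.2.1, hσ.2.2.1]

theorem add (hσ : ClassK σ) (hγ : ClassK γ) : ClassK (fun r => σ r + γ r) :=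
  ⟨hσ.1.add hγ.1, hσ.2.1.add hγ.2.1, by simp [hσ.2.2.1, hγ.2.2.1],
    fun _ hr => add_nonneg (hσ.nonneg hr) (hγ.nonneg hr)⟩

theorem const_mul (hγ : ClassK γ) {c : ℝ} (hc : 0 < c) : ClassK (fun r => c * γ r) :=
  ⟨continuousOn_const.mul hγ.1,
    fun _ ha _ hb hab => mul_lt_mul_of_pos_left (hγ.2.1 ha hb hab) hc, by simp [hγ.2.2.1],
    fun _ hr => mul_nonneg hc.le (hγ.nonneg hr)⟩

theorem exists_gt_lt_add (hσ : ClassK σ) {a ε : ℝ} (ha : 0 ≤ a) (hε : 0 < ε) :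
    ∃ b, a < b ∧ σ b < σ a + ε := by
  have hright : ContinuousWithinAt σ (Ioi a) a :=
    (hσ.1 a ha).mono fun _ hx => ha.trans (le_of_lt hx)
  have hnear : ∀ᶠ b in 𝓝[>] a, σ b < σ a + ε :=
    hright.tendsto.eventually_lt_const (lt_add_of_pos_right _ hε)
  obtain ⟨b, hσb, hab⟩ := (hnear.and self_mem_nhdsWithin).exists
  exact ⟨b, hab, hσb⟩

end ClassK

section

variable {S : DynSysWithInputs X U} {σ γ γbar : ℝ → ℝ}

theorem UGSWith.norm_flow_le_of_le (hUGS : UGSWith S σ γ) (hγ : MonotoneOn γ (Ici 0))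
    (x₀ : X) {u : ℝ → U} (hu : u ∈ S.inputs) {s t : ℝ} (hs : 0 ≤ s) (hst : s ≤ t) :
    ‖S.flow t x₀ u‖ ≤ σ ‖S.flow s x₀ u‖ + γ (S.inNorm u) := by
  have hshift := S.shift_mem u hu s hs
  have hts : 0 ≤ t - s := sub_nonneg.2 hst
  calc ‖S.flow t x₀ u‖ = ‖S.flow (t - s) (S.flow s x₀ u) (fun r => u (r + s))‖ := by
        rw [← S.cocycle x₀ u hu s (t - s) hs hts, sub_add_cancel]
    _ ≤ σ ‖S.flow s x₀ u‖ + γ (S.inNorm fun r => u (r + s)) := hUGS _ _ hshift _ hts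
    _ ≤ σ ‖S.flow s x₀ u‖ + γ (S.inNorm u) := by
        gcongr
        exact hγ (S.inNorm_nonneg _ hshift) (S.inNorm_nonneg u hu) (S.shift_norm_le u hu s hs)

theorem WeakLimitWith.exists_norm_flow_lt (hWL : WeakLimitWith S γbar) (x₀ : X)
    {u : ℝ → U} (hu : u ∈ S.inputs) {b : ℝ} (hb : γbar (S.inNorm u) < b) :
    ∃ t, 0 ≤ t ∧ ‖S.flow t x₀ u‖ < b := by
  obtain ⟨τ, hτ, hinf⟩ := hWL ((b - γbar (S.inNorm u)) / 2) (by linarith) x₀ u hu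
  have hbdd : BddBelow ((fun t => ‖S.flow t x₀ u‖) '' Icc 0 τ) :=
    ⟨0, forall_mem_image.2 fun _ _ => norm_nonneg _⟩
  have hinf_lt : sInf ((fun t => ‖S.flow t x₀ u‖) '' Icc 0 τ) < b := by linarith
  obtain ⟨_, ⟨t, ht, rfl⟩, hlt⟩ :=
    (csInf_lt_iff hbdd ⟨_, mem_image_of_mem _ ⟨le_rfl, hτ⟩⟩).1 hinf_lt
  exact ⟨t, ht.1, hlt⟩

theorem WeakAGWith.mono {γ₁ γ₂ : ℝ → ℝ} (h : WeakAGWith S γ₁)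
    (hle : ∀ r, 0 ≤ r → γ₁ r ≤ γ₂ r) : WeakAGWith S γ₂ := by
  intro ε hε x₀ u hu
  obtain ⟨τ, hτ, hbound⟩ := h ε hε x₀ u hu
  refine ⟨τ, hτ, fun t ht => (hbound t ht).trans ?_⟩
  gcongr
  exact hle _ (S.inNorm_nonneg u hu)

theorem UGSWith.weakAGWith_of_weakLimitWith (hσ : ClassK σ) (hγ : ClassK γ)
    (hγbar : ClassK γbar) (hUGS : UGSWith S σ γ) (hWL : WeakLimitWith S γbar) :
    WeakAGWith S (fun r => σ (γbar r) + γ r) := by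
  intro ε hε x₀ u hu
  obtain ⟨b, hb, hσb⟩ := hσ.exists_gt_lt_add (hγbar.nonneg (S.inNorm_nonneg u hu)) hε
  obtain ⟨t₁, ht₁, hsmall⟩ := hWL.exists_norm_flow_lt x₀ hu hb
  refine ⟨t₁, ht₁, fun t ht => ?_⟩
  calc ‖S.flow t x₀ u‖ ≤ σ ‖S.flow t₁ x₀ u‖ + γ (S.inNorm u) :=
        hUGS.norm_flow_le_of_le hγ.monotoneOn x₀ hu ht₁ ht
    _ ≤ σ b + γ (S.inNorm u) := by
        gcongr
        exact hσ.monotoneOn (norm_nonneg _) ((norm_nonneg _).trans hsmall.le) hsmall.le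
    _ ≤ ε + (σ (γbar (S.inNorm u)) + γ (S.inNorm u)) := by linarith

end

/-- If `𝔖` is uniformly globally stable (with gains `σ̲, γ̲ ∈ 𝒦`) and has the
weak limit property (with gain `γ̄ ∈ 𝒦`), then `𝔖` is uniformly globally stable and has the
weak asymptotic gain property; moreover `r ↦ σ̲(2 γ̄ r) + γ̲ r` is a weak asymptotic gain. -/
theorem ugs_weakLimit_implies_weakAG
    (S : DynSysWithInputs X U) (σ γ γbar : ℝ → ℝ)
    (hσ : ClassK σ) (hγ : ClassK γ) (hγbar : ClassK γbar)
    (hUGS : UGSWith S σ γ) (hWL : WeakLimitWith S γbar) :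
    (UGS S ∧ WeakAG S) ∧ WeakAGWith S (fun r => σ (2 * γbar r) + γ r) := by
  have hAG : WeakAGWith S (fun r => σ (2 * γbar r) + γ r) :=
    (hUGS.weakAGWith_of_weakLimitWith hσ hγ hγbar hWL).mono fun r hr => by
      have hγbar_r := hγbar.nonneg hr
      gcongr
      exact hσ.monotoneOn hγbar_r (mem_Ici.2 (by linarith)) (by linarith)
  have hgain : ClassK (fun r => σ (2 * γbar r) + γ r) :=
    (hσ.comp (hγbar.const_mul two_pos)).add hγ
  exact ⟨⟨⟨σ, γ, hσ, hγ, hUGS⟩, ⟨_, Or.inl hgain, hAG⟩⟩, hAG⟩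
end
end

section
/- Let p ∈ [1,∞) ∪ {∞}, let α : ℝ → [0,∞) satisfy α(0) = 0, and suppose the set 𝒰 := { u ∈ L^p([0,∞),ℝ) : α∘u is locally integrable and ∫₀^∞ α(u(s)) ds = ∞ }, equipped with ‖·‖_𝒰 := ‖·‖_{L^p}, is nonempty. Let X be a nontrivial Banach space (X ≠ {0}) and let (T_t)_{t≥0} be a C₀-semigroup on X, and define φ(t,x₀,u) := T_{∫₀^t α(u(s)) ds} x₀. Then the system 𝔖 := (X,𝒰,φ) is NOT of strong asymptotic gain: for every γ̄ ∈ 𝒦 ∪ {0} there exist ε > 0 and x₀ ∈ X such that for every τ ≥ 0 there exist t ≥ τ and u ∈ 𝒰 with ‖φ(t,x₀,u)‖ > ε + γ̄(‖u‖_𝒰). In particular, 𝔖 is not strongly input-to-state stable. -/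
/-!
An input that vanishes on `[0, τ)` gives `∫₀^τ α(u(s)) ds = 0` (as `α 0 = 0`), so at time `τ`
the state is `T_0 x₀ = x₀`. Delaying a fixed `u₀ ∈ 𝒰` by `τ` keeps it in `𝒰` and preserves its
`L^p` norm, hence with `ε = 1` and `‖x₀‖ > 1 + γ̄(‖u₀‖)` no time `τ` can work.
-/

open MeasureTheory Filter Set Topology
open scoped ENNReal NNReal

noncomputable section

variable {X U : Type*} [NormedAddCommGroup X]

/-- The input space of the modulated-linear counterexample: `u ∈ L^p([0,∞),ℝ)` such that
`α ∘ u` is locally integrable on `[0,∞)` but `∫₀^∞ α(u(s)) ds = ∞`. -/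
def ModulInputs (p : ℝ≥0∞) (α : ℝ → ℝ) : Set (ℝ → ℝ) :=
  {u | MemLp u p (volume.restrict (Ici (0:ℝ))) ∧
       LocallyIntegrableOn (fun s => α (u s)) (Ici (0:ℝ)) volume ∧
       ∫⁻ s in Ici (0:ℝ), ENNReal.ofReal (α (u s)) = ⊤}

/-- The concatenation `0 &_τ u`. -/
def delay {E : Type*} [Zero E] (τ : ℝ) (u : ℝ → E) : ℝ → E :=
  fun s => if s < τ then 0 else u (s - τ)

section Delay

variable {E F : Type*} {τ : ℝ}

lemma delay_apply_of_lt [Zero E] (u : ℝ → E) {s : ℝ} (hs : s < τ) : delay τ u s = 0 :=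
  if_pos hs

lemma delay_eq_indicator [Zero E] (u : ℝ → E) :
    delay τ u = (Ici τ).indicator (fun s => u (s - τ)) := by
  ext s
  by_cases hs : s < τ
  · simp [delay, hs]
  · simp [delay, hs, not_lt.mp hs]

lemma comp_delay [Zero E] [Zero F] (g : E → F) (hg : g 0 = 0) (u : ℝ → E) :
    (fun s => g (delay τ u s)) = delay τ (fun s => g (u s)) := by
  ext s
  by_cases hs : s < τ <;> simp [delay, hs, hg]

lemma measurePreserving_sub_right_restrict_Ici (τ : ℝ) :
    MeasurePreserving (· - τ) (volume.restrict (Ici τ)) (volume.restrict (Ici (0:ℝ))) := by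
  have h := (measurePreserving_sub_right volume τ).restrict_preimage (measurableSet_Ici (a := 0))
  rwa [preimage_sub_const_Ici, zero_add] at h

variable [NormedAddCommGroup E] {u : ℝ → E} {p : ℝ≥0∞}

lemma eLpNorm_delay (hτ : 0 ≤ τ) (hu : AEStronglyMeasurable u (volume.restrict (Ici 0))) :
    eLpNorm (delay τ u) p (volume.restrict (Ici 0)) = eLpNorm u p (volume.restrict (Ici 0)) := by
  rw [delay_eq_indicator, eLpNorm_indicator_eq_eLpNorm_restrict measurableSet_Ici,
    Measure.restrict_restrict_of_subset (Ici_subset_Ici.mpr hτ)]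
  exact eLpNorm_comp_measurePreserving hu (measurePreserving_sub_right_restrict_Ici τ)

lemma MeasureTheory.MemLp.delay (hτ : 0 ≤ τ) (hu : MemLp u p (volume.restrict (Ici 0))) :
    MemLp (delay τ u) p (volume.restrict (Ici 0)) := by
  rw [delay_eq_indicator, memLp_indicator_iff_restrict measurableSet_Ici,
    Measure.restrict_restrict_of_subset (Ici_subset_Ici.mpr hτ)]
  exact hu.comp_measurePreserving (measurePreserving_sub_right_restrict_Ici τ)

lemma MeasureTheory.LocallyIntegrableOn.delay (hu : LocallyIntegrableOn u (Ici 0)) :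
    LocallyIntegrableOn (delay τ u) (Ici 0) := by
  rw [locallyIntegrableOn_iff isClosed_Ici.isLocallyClosed] at hu ⊢
  intro k hk hkc
  rw [delay_eq_indicator, integrableOn_indicator_iff measurableSet_Ici]
  set e : ℝ → ℝ := (· - τ)
  have hpre : e ⁻¹' (e '' (Ici τ ∩ k)) = Ici τ ∩ k := preimage_image_eq _ sub_left_injective
  rw [← hpre]
  refine ((measurePreserving_sub_right volume τ).integrableOn_comp_preimage
    (measurableEmbedding_subRight τ)).mpr (hu _ ?_ ((hkc.inter_left isClosed_Ici).image ?_))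
  · rintro _ ⟨s, ⟨hs, -⟩, rfl⟩
    exact sub_nonneg.mpr (mem_Ici.mp hs)
  · fun_prop

lemma setLIntegral_Ici_delay (hτ : 0 ≤ τ) (f : ℝ → ℝ≥0∞) :
    ∫⁻ s in Ici 0, delay τ f s = ∫⁻ s in Ici 0, f s := by
  rw [delay_eq_indicator, lintegral_indicator measurableSet_Ici,
    Measure.restrict_restrict_of_subset (Ici_subset_Ici.mpr hτ)]
  exact (measurePreserving_sub_right_restrict_Ici τ).lintegral_comp_emb
    (measurableEmbedding_subRight τ) f

lemma intervalIntegral_delay_eq_zero [NormedSpace ℝ E] (hτ : 0 ≤ τ) (f : ℝ → E) :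
    ∫ s in (0:ℝ)..τ, delay τ f s = 0 := by
  rw [intervalIntegral.integral_of_le hτ, integral_Ioc_eq_integral_Ioo]
  exact setIntegral_eq_zero_of_forall_eq_zero fun s hs => delay_apply_of_lt f hs.2

end Delay

lemma delay_mem_modulInputs {p : ℝ≥0∞} {α : ℝ → ℝ} (hα0 : α 0 = 0) {u : ℝ → ℝ}
    (hu : u ∈ ModulInputs p α) {τ : ℝ} (hτ : 0 ≤ τ) : delay τ u ∈ ModulInputs p α := by
  obtain ⟨hLp, hloc, hdiv⟩ := hu
  refine ⟨MemLp.delay hτ hLp, ?_, ?_⟩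
  · rw [comp_delay α hα0]
    exact LocallyIntegrableOn.delay hloc
  · rw [comp_delay (fun r => ENNReal.ofReal (α r)) (by simp [hα0]), setLIntegral_Ici_delay hτ]
    exact hdiv

theorem modulated_linear_not_strongAG_general
    [NormedSpace ℝ X] [Nontrivial X]
    (p : ℝ≥0∞)
    (α : ℝ → ℝ) (hα0 : α 0 = 0)
    (hne : (ModulInputs p α).Nonempty)
    (T : ℝ → X →L[ℝ] X)
    (hT0 : T 0 = ContinuousLinearMap.id ℝ X) :
    ∀ γbar : ℝ → ℝ, ClassKZero γbar →
      ∃ ε : ℝ, 0 < ε ∧ ∃ x₀ : X, ∀ τ : ℝ, 0 ≤ τ →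
        ∃ t : ℝ, τ ≤ t ∧ ∃ u ∈ ModulInputs p α,
          ε + γbar ((eLpNorm u p (volume.restrict (Ici (0:ℝ)))).toReal)
            < ‖T (∫ s in (0:ℝ)..t, α (u s)) x₀‖ := by
  intro γbar _
  obtain ⟨u₀, hu₀⟩ := hne
  set c := γbar (eLpNorm u₀ p (volume.restrict (Ici (0:ℝ)))).toReal
  obtain ⟨x₀, hx₀⟩ := exists_norm_eq X (by positivity : 0 ≤ 2 + |c|)
  refine ⟨1, one_pos, x₀, fun τ hτ => ⟨τ, le_rfl, delay τ u₀, delay_mem_modulInputs hα0 hu₀ hτ, ?_⟩⟩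
  rw [eLpNorm_delay hτ hu₀.1.1, comp_delay α hα0, intervalIntegral_delay_eq_zero hτ, hT0,
    ContinuousLinearMap.id_apply, hx₀]
  linarith [le_abs_self c]

/-- Let `p ∈ [1,∞]`, `α : ℝ → [0,∞)` with `α 0 = 0` such that `ModulInputs p α`
is nonempty, let `X ≠ {0}` be a Banach space and `(T_t)` a `C₀`-semigroup on `X`, and let
`φ(t,x₀,u) = T_{∫₀^t α(u(s)) ds} x₀`. Then the system `(X, ModulInputs p α, φ)` is NOT of
strong asymptotic gain: for every `γ̄ ∈ 𝒦 ∪ {0}` there are `ε > 0` and `x₀ ∈ X` such that for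
every `τ ≥ 0` there are `t ≥ τ` and `u ∈ 𝒰` with `‖φ(t,x₀,u)‖ > ε + γ̄(‖u‖_{L^p})`. -/
theorem modulated_linear_not_strongAG
    [NormedSpace ℝ X] [Nontrivial X]
    (p : ℝ≥0∞) (hp : 1 ≤ p)
    (α : ℝ → ℝ) (hα0 : α 0 = 0) (hαnn : ∀ r : ℝ, 0 ≤ α r)
    (hne : (ModulInputs p α).Nonempty)
    (T : ℝ → X →L[ℝ] X)
    (hT0 : T 0 = ContinuousLinearMap.id ℝ X)
    (hTsem : ∀ s t : ℝ, 0 ≤ s → 0 ≤ t → T (t + s) = (T t).comp (T s))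
    (hTcont : ∀ x : X, ContinuousOn (fun t => T t x) (Ici 0)) :
    ∀ γbar : ℝ → ℝ, ClassKZero γbar →
      ∃ ε : ℝ, 0 < ε ∧ ∃ x₀ : X, ∀ τ : ℝ, 0 ≤ τ →
        ∃ t : ℝ, τ ≤ t ∧ ∃ u ∈ ModulInputs p α,
          ε + γbar ((eLpNorm u p (volume.restrict (Ici (0:ℝ)))).toReal)
            < ‖T (∫ s in (0:ℝ)..t, α (u s)) x₀‖ :=
  modulated_linear_not_strongAG_general p α hα0 hne T hT0
end
end

section
/- Let X be a nontrivial Banach space, p ∈ [1,∞) ∪ {∞}, and 𝒰 := L^p([0,∞),ℝ) with ‖·‖_𝒰 = ‖·‖_{L^p}. Let (T_t)_{t≥0} be a C₀-semigroup on X and let α : ℝ → [0,∞) be a continuous function such that α∘u is locally integrable for every u ∈ 𝒰. Define φ(t,x₀,u) := T_{∫₀^t α(u(s)) ds} x₀. Then 𝔖 := (X,𝒰,φ) is a dynamical system with inputs, and 𝔖 is weakly input-to-state stable if and only if 𝔖 is strongly input-to-state stable. -/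
open MeasureTheory Filter Set Topology
open scoped ENNReal NNReal

noncomputable section

variable {X U : Type*} [NormedAddCommGroup X]

/-!
Weak ISS already forces the semigroup to be bounded and strongly stable. Along the zero input the
flow is `T (t * α 0)`, and `α 0 > 0` because otherwise every state would be an equilibrium; so
UGS with Banach–Steinhaus bounds `‖T r‖ ≤ M`, and the weak asymptotic gain gives `T r x → 0`.
On inputs with `‖u‖ ≤ B` the clock `∫₀ᵗ α (u s) ds` grows at least linearly in `t`, uniformly in
`u`: for `p < ∞` since `α ≥ α 0 / 2` on `[-δ, δ]` gives `α a ≥ α 0 / 2 * (1 - |a|^p / δ^p)` for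
all `a`, whose deficit integrates to at most `α 0 / 2 * (B / δ)^p`; for `p = ∞` since `u` stays
in `[-B, B]` and `α > 0` everywhere (by the same equilibrium argument with constant inputs).
Hence, for `‖u‖ ≤ M ‖x₀‖` the state is small after a time independent of `u`, while for
`‖u‖ > M ‖x₀‖` the bound `‖φ‖ ≤ M ‖x₀‖ < ‖u‖` holds anyway: strong AG with gain `id`.
-/

section HalfLineLp

variable {E : Type*} [NormedAddCommGroup E] {p : ℝ≥0∞}

lemma measurePreserving_add_right_restrict_Ici (a c : ℝ) :
    MeasurePreserving (· + c) (volume.restrict (Ici a)) (volume.restrict (Ici (a + c))) := by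
  have hpre : (· + c) ⁻¹' Ici (a + c) = Ici a := by ext s; simp
  have := (measurePreserving_add_right volume c).restrict_preimage (measurableSet_Ici (a := a + c))
  rwa [hpre] at this

lemma MeasureTheory.MemLp.comp_add_right_Ici {u : ℝ → E} (hu : MemLp u p (volume.restrict (Ici 0)))
    {τ : ℝ} (hτ : 0 ≤ τ) : MemLp (fun s => u (s + τ)) p (volume.restrict (Ici 0)) := by
  have hshift := measurePreserving_add_right_restrict_Ici 0 τ
  rw [zero_add] at hshift
  exact MemLp.comp_measurePreserving
    (hu.mono_measure (Measure.restrict_mono (Ici_subset_Ici.2 hτ) le_rfl)) hshift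

lemma eLpNorm_comp_add_right_Ici_le {u : ℝ → E}
    (hu : AEStronglyMeasurable u (volume.restrict (Ici 0))) {τ : ℝ} (hτ : 0 ≤ τ) :
    eLpNorm (fun s => u (s + τ)) p (volume.restrict (Ici 0))
      ≤ eLpNorm u p (volume.restrict (Ici 0)) := by
  have hle := Measure.restrict_mono (Ici_subset_Ici.2 hτ) (le_refl (volume : Measure ℝ))
  have hshift := measurePreserving_add_right_restrict_Ici 0 τ
  rw [zero_add] at hshift
  exact (eLpNorm_comp_measurePreserving (hu.mono_measure hle) hshift).trans_le
    (eLpNorm_mono_measure u hle)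

lemma MeasureTheory.MemLp.concat_Ici {u₁ u₂ : ℝ → E} (h₁ : MemLp u₁ p (volume.restrict (Ici 0)))
    (h₂ : MemLp u₂ p (volume.restrict (Ici 0))) (τ : ℝ) :
    MemLp (fun s => if s < τ then u₁ s else u₂ (s - τ)) p (volume.restrict (Ici 0)) := by
  classical
  have hshift := measurePreserving_add_right_restrict_Ici τ (-τ)
  rw [add_neg_cancel] at hshift
  have h₂' : MemLp (fun s => u₂ (s + -τ)) p (volume.restrict (Ici τ)) :=
    h₂.comp_measurePreserving hshift
  have hcompl : (volume.restrict (Ici (0:ℝ))).restrict (Iio τ)ᶜ ≤ volume.restrict (Ici τ) := by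
    rw [Measure.restrict_restrict measurableSet_Iio.compl, compl_Iio]
    exact Measure.restrict_mono inter_subset_left le_rfl
  convert (h₁.mono_measure Measure.restrict_le_self).piecewise measurableSet_Iio
    (h₂'.mono_measure hcompl) using 1
  ext s
  simp only [Set.piecewise, mem_Iio, sub_eq_add_neg]

end HalfLineLp

section TimeChange

variable {E : Type*} [NormedAddCommGroup E] {p : ℝ≥0∞}

lemma MeasureTheory.LocallyIntegrableOn.intervalIntegrable_of_nonneg {f : ℝ → E}
    (hf : LocallyIntegrableOn f (Ici 0)) {a b : ℝ} (ha : 0 ≤ a) (hb : 0 ≤ b) :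
    IntervalIntegrable f volume a b :=
  (hf.integrableOn_compact_subset (fun _ hx => (le_min ha hb).trans hx.1)
    isCompact_uIcc).intervalIntegrable

lemma MeasureTheory.LocallyIntegrableOn.continuousOn_primitive_Ici [NormedSpace ℝ E] {f : ℝ → E}
    (hf : LocallyIntegrableOn f (Ici 0)) :
    ContinuousOn (fun t => ∫ s in (0:ℝ)..t, f s) (Ici 0) := by
  intro t (ht : 0 ≤ t)
  have hIcc : Icc 0 (t + 1) ∈ 𝓝[Ici 0] t := by
    rw [← Ici_inter_Iic]
    exact inter_mem self_mem_nhdsWithin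
      (mem_nhdsWithin_of_mem_nhds (Iic_mem_nhds (by linarith)))
  have hcont := intervalIntegral.continuousOn_primitive_interval
    (hf.integrableOn_compact_subset (fun _ hx => (le_min le_rfl (by linarith)).trans hx.1)
      (isCompact_uIcc (a := 0) (b := t + 1)))
  rw [uIcc_of_le (by linarith)] at hcont
  exact (hcont t ⟨ht, by linarith⟩).mono_of_mem_nhdsWithin hIcc

lemma sub_mul_norm_rpow_le {f : E → ℝ} {c δ q : ℝ} (hf : ∀ a, 0 ≤ f a) (hc : 0 ≤ c) (hδ : 0 < δ)
    (hq : 0 ≤ q) (hfδ : ∀ a, ‖a‖ ≤ δ → c ≤ f a) (a : E) :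
    c - c / δ ^ q * ‖a‖ ^ q ≤ f a := by
  rcases le_or_gt ‖a‖ δ with ha | ha
  · have : 0 ≤ c / δ ^ q * ‖a‖ ^ q := by positivity
    linarith [hfδ a ha]
  · have hδq : δ ^ q ≤ ‖a‖ ^ q := Real.rpow_le_rpow hδ.le ha.le hq
    have : c ≤ c / δ ^ q * ‖a‖ ^ q := by
      rw [div_mul_eq_mul_div, le_div_iff₀ (by positivity)]
      exact mul_le_mul_of_nonneg_left hδq hc
    linarith [hf a]

lemma mul_sub_le_intervalIntegral_comp_of_memLp (hp₀ : p ≠ 0) (hp : p ≠ ∞) {f : E → ℝ}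
    {u : ℝ → E} {c δ t : ℝ} (hf : ∀ a, 0 ≤ f a) (hc : 0 ≤ c) (hδ : 0 < δ)
    (hfδ : ∀ a, ‖a‖ ≤ δ → c ≤ f a) (hu : MemLp u p (volume.restrict (Ici 0)))
    (hfu : IntervalIntegrable (fun s => f (u s)) volume 0 t) (ht : 0 ≤ t) :
    c * t - c / δ ^ p.toReal * lpNorm u p (volume.restrict (Ici 0)) ^ p.toReal
      ≤ ∫ s in (0:ℝ)..t, f (u s) := by
  set q := p.toReal
  have hint : IntegrableOn (fun s => ‖u s‖ ^ q) (Ici 0) := hu.integrable_norm_rpow hp₀ hp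
  have hIoc : IntegrableOn (fun s => ‖u s‖ ^ q) (Ioc 0 t) :=
    hint.mono_set (Ioc_subset_Ioi_self.trans Ioi_subset_Ici_self)
  have hpow : ∫ s in Ioc 0 t, ‖u s‖ ^ q ≤ lpNorm u p (volume.restrict (Ici 0)) ^ q := by
    rw [lpNorm_eq_integral_norm_rpow_toReal hp₀ hp hu.1,
      ← Real.rpow_mul (integral_nonneg fun _ => by positivity),
      inv_mul_cancel₀ (ENNReal.toReal_ne_zero.2 ⟨hp₀, hp⟩), Real.rpow_one]
    exact setIntegral_mono_set hint (ae_of_all _ fun _ => by positivity)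
      (Ioc_subset_Ioi_self.trans Ioi_subset_Ici_self).eventuallyLE
  calc c * t - c / δ ^ q * lpNorm u p (volume.restrict (Ici 0)) ^ q
      ≤ c * t - c / δ ^ q * ∫ s in Ioc 0 t, ‖u s‖ ^ q := by gcongr
    _ = ∫ s in (0:ℝ)..t, (c - c / δ ^ q * ‖u s‖ ^ q) := by
      rw [intervalIntegral.integral_of_le ht, integral_sub (integrable_const c)
        (hIoc.const_mul _), integral_const_mul, setIntegral_const, Real.volume_real_Ioc_of_le ht,
        sub_zero, smul_eq_mul, mul_comm]
    _ ≤ ∫ s in (0:ℝ)..t, f (u s) :=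
      intervalIntegral.integral_mono_on ht
        (intervalIntegrable_const.sub ((intervalIntegrable_iff_integrableOn_Ioc_of_le ht).2
          (hIoc.const_mul _)))
        hfu fun s _ => sub_mul_norm_rpow_le hf hc hδ ENNReal.toReal_nonneg hfδ (u s)

lemma mul_le_intervalIntegral_comp_of_ae_norm_le {f : E → ℝ} {u : ℝ → E} {B m t : ℝ}
    (hfB : ∀ a, ‖a‖ ≤ B → m ≤ f a) (hu : ∀ᵐ s ∂volume.restrict (Ici 0), ‖u s‖ ≤ B)
    (hfu : IntervalIntegrable (fun s => f (u s)) volume 0 t) (ht : 0 ≤ t) :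
    m * t ≤ ∫ s in (0:ℝ)..t, f (u s) := by
  have hle := intervalIntegral.integral_mono_ae_restrict ht intervalIntegrable_const hfu <| by
    filter_upwards [ae_restrict_of_ae_restrict_of_subset Icc_subset_Ici_self hu] with s hs
    exact hfB _ hs
  simpa [mul_comm] using hle

end TimeChange

section TimeChangeDivergence

variable {p : ℝ≥0∞} {α : ℝ → ℝ}

lemma exists_mul_sub_le_intervalIntegral_comp_of_ne_top (hp₀ : p ≠ 0) (hp : p ≠ ∞)
    (hα : Continuous α) (hα₀ : ∀ a, 0 ≤ α a) (hpos : 0 < α 0)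
    (hloc : ∀ u : ℝ → ℝ, MemLp u p (volume.restrict (Ici 0)) →
      LocallyIntegrableOn (fun s => α (u s)) (Ici 0))
    (B : ℝ) : ∃ m > 0, ∃ K, ∀ u : ℝ → ℝ, MemLp u p (volume.restrict (Ici 0)) →
      lpNorm u p (volume.restrict (Ici 0)) ≤ B → ∀ t, 0 ≤ t →
        m * t - K ≤ ∫ s in (0:ℝ)..t, α (u s) := by
  obtain ⟨δ, hδ, hαδ⟩ := Metric.nhds_basis_closedBall.eventually_iff.1
    (hα.continuousAt.eventually (lt_mem_nhds (half_lt_self hpos)))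
  refine ⟨α 0 / 2, half_pos hpos, α 0 / 2 / δ ^ p.toReal * B ^ p.toReal,
    fun u hu huB t ht => le_trans ?_ <| mul_sub_le_intervalIntegral_comp_of_memLp hp₀ hp hα₀
      (half_pos hpos).le hδ (fun a ha => (hαδ (mem_closedBall_zero_iff.2 ha)).le) hu
      ((hloc u hu).intervalIntegrable_of_nonneg le_rfl ht) ht⟩
  have hpow := Real.rpow_le_rpow lpNorm_nonneg huB (ENNReal.toReal_nonneg (a := p))
  have hcoef : 0 ≤ α 0 / 2 / δ ^ p.toReal := div_nonneg (half_pos hpos).le (by positivity)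
  exact sub_le_sub_left (mul_le_mul_of_nonneg_left hpow hcoef) _

lemma exists_mul_le_intervalIntegral_comp_of_top (hα : Continuous α) (hpos : ∀ a, 0 < α a)
    (hloc : ∀ u : ℝ → ℝ, MemLp u ∞ (volume.restrict (Ici 0)) →
      LocallyIntegrableOn (fun s => α (u s)) (Ici 0))
    (B : ℝ) : ∃ m > 0, ∀ u : ℝ → ℝ, MemLp u ∞ (volume.restrict (Ici 0)) →
      lpNorm u ∞ (volume.restrict (Ici 0)) ≤ B → ∀ t, 0 ≤ t →
        m * t ≤ ∫ s in (0:ℝ)..t, α (u s) := by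
  obtain ⟨a₀, -, ha₀⟩ := (isCompact_closedBall (0:ℝ) |B|).exists_isMinOn
    (Metric.nonempty_closedBall.2 (abs_nonneg B)) hα.continuousOn
  refine ⟨α a₀, hpos a₀, fun u hu huB t ht => mul_le_intervalIntegral_comp_of_ae_norm_le
    (fun a ha => ha₀ (mem_closedBall_zero_iff.2 ha)) ?_
    ((hloc u hu).intervalIntegrable_of_nonneg le_rfl ht) ht⟩
  filter_upwards [ae_le_lpNorm_exponent_top hu] with s hs
  exact hs.trans (huB.trans (le_abs_self B))

lemma eventually_le_intervalIntegral_comp (hp₀ : p ≠ 0) (hα : Continuous α)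
    (hα₀ : ∀ a, 0 ≤ α a) (hpos₀ : 0 < α 0) (hpos : p = ∞ → ∀ a, 0 < α a)
    (hloc : ∀ u : ℝ → ℝ, MemLp u p (volume.restrict (Ici 0)) →
      LocallyIntegrableOn (fun s => α (u s)) (Ici 0))
    (B R : ℝ) : ∀ᶠ t in atTop, ∀ u : ℝ → ℝ, MemLp u p (volume.restrict (Ici 0)) →
      (eLpNorm u p (volume.restrict (Ici 0))).toReal ≤ B → R ≤ ∫ s in (0:ℝ)..t, α (u s) := by
  obtain ⟨m, hm, K, hK⟩ : ∃ m > 0, ∃ K, ∀ u : ℝ → ℝ, MemLp u p (volume.restrict (Ici 0)) →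
      lpNorm u p (volume.restrict (Ici 0)) ≤ B → ∀ t, 0 ≤ t →
        m * t - K ≤ ∫ s in (0:ℝ)..t, α (u s) := by
    rcases eq_or_ne p ∞ with rfl | hp
    · obtain ⟨m, hm, h⟩ := exists_mul_le_intervalIntegral_comp_of_top hα (hpos rfl) hloc B
      exact ⟨m, hm, 0, fun u hu huB t ht => (sub_zero (m * t)).trans_le (h u hu huB t ht)⟩
    · exact exists_mul_sub_le_intervalIntegral_comp_of_ne_top hp₀ hp hα hα₀ hpos₀ hloc B
  filter_upwards [eventually_ge_atTop 0, eventually_ge_atTop ((R + K) / m)] with t ht htR u hu huB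
  have := hK u hu (by rwa [← toReal_eLpNorm hu.1]) t ht
  rw [div_le_iff₀ hm] at htR
  linarith

end TimeChangeDivergence

lemma exists_forall_opNorm_le_of_forall_norm_le {𝕜 E F ι : Type*} [NontriviallyNormedField 𝕜]
    [NormedAddCommGroup E] [NormedSpace 𝕜 E] [CompleteSpace E] [NormedAddCommGroup F]
    [NormedSpace 𝕜 F] {T : ι → E →L[𝕜] F} {s : Set ι} (h : ∀ x, ∃ C, ∀ i ∈ s, ‖T i x‖ ≤ C) :
    ∃ M, ∀ i ∈ s, ‖T i‖ ≤ M := by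
  obtain ⟨M, hM⟩ := banach_steinhaus (g := fun i : s => T i) fun x =>
    (h x).imp fun _ hC i => hC i i.2
  exact ⟨M, fun i hi => hM ⟨i, hi⟩⟩

lemma classKZero_id : ClassKZero id :=
  Or.inl ⟨continuousOn_id, strictMonoOn_id, rfl, fun _ hr => hr⟩

section Stability

variable {S : DynSysWithInputs X U} {γ : ℝ → ℝ}

lemma StrongAGWith.weakAGWith (h : StrongAGWith S γ) : WeakAGWith S γ :=
  fun ε hε x u hu => (h ε hε x).imp fun _ hτ => ⟨hτ.1, fun t ht => hτ.2 t ht u hu⟩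

lemma StrongISS.weakISS (h : StrongISS S) : WeakISS S :=
  ⟨h.1, h.2.imp fun _ hγ => ⟨hγ.1, StrongAGWith.weakAGWith hγ.2⟩⟩

lemma UGS.exists_forall_norm_flow_le (h : UGS S) {u : ℝ → U} (hu : u ∈ S.inputs) (x : X) :
    ∃ C, ∀ t, 0 ≤ t → ‖S.flow t x u‖ ≤ C :=
  h.elim fun _ ⟨_, _, _, hσγ⟩ => ⟨_, hσγ x u hu⟩

lemma WeakAGWith.not_forall_flow_eq_self [NormedSpace ℝ X] [Nontrivial X]
    (h : WeakAGWith S γ) {u : ℝ → U} (hu : u ∈ S.inputs) : ¬ ∀ t x, S.flow t x u = x := by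
  intro hfix
  obtain ⟨x, hx⟩ := exists_norm_eq X (by positivity : 0 ≤ |γ (S.inNorm u)| + 1)
  obtain ⟨τ, -, hτ⟩ := h (1 / 2) one_half_pos x u hu
  have := hτ τ le_rfl
  rw [hfix, hx] at this
  linarith [le_abs_self (γ (S.inNorm u))]

lemma WeakAGWith.tendsto_flow_zero (h : WeakAGWith S γ) {u : ℝ → U} (hu : u ∈ S.inputs)
    (hγu : γ (S.inNorm u) = 0) (x : X) : Tendsto (fun t => S.flow t x u) atTop (𝓝 0) := by
  refine Metric.tendsto_atTop.2 fun ε hε => ?_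
  obtain ⟨τ, -, hτ⟩ := h (ε / 2) (half_pos hε) x u hu
  refine ⟨τ, fun t ht => ?_⟩
  rw [dist_zero_right]
  linarith [hτ t ht]

lemma ClassKZero.map_zero (hγ : ClassKZero γ) : γ 0 = 0 :=
  hγ.elim (fun hK => hK.2.2.1) (· 0)

theorem strongAGWith_id_of_flow_eq [NormedSpace ℝ X] {T : ℝ → X →L[ℝ] X}
    {θ : ℝ → (ℝ → U) → ℝ} (hflow : ∀ t x u, S.flow t x u = T (θ t u) x)
    (hθ₀ : ∀ t, 0 ≤ t → ∀ u ∈ S.inputs, 0 ≤ θ t u)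
    (hθ : ∀ B R : ℝ, ∀ᶠ t in atTop, ∀ u ∈ S.inputs, S.inNorm u ≤ B → R ≤ θ t u)
    {M : ℝ} (hM : ∀ r, 0 ≤ r → ‖T r‖ ≤ M) (hdecay : ∀ x, Tendsto (fun r => T r x) atTop (𝓝 0)) :
    StrongAGWith S id := by
  intro ε hε x
  obtain ⟨ρ, hρ⟩ := eventually_atTop.1 <|
    (tendsto_norm_zero.comp (hdecay x)).eventually (eventually_le_nhds hε)
  obtain ⟨τ, hτ⟩ := eventually_atTop.1 (hθ (M * ‖x‖) ρ)
  refine ⟨max τ 0, le_max_right _ _, fun t ht u hu => ?_⟩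
  have hu₀ := S.inNorm_nonneg u hu
  rw [hflow, id]
  rcases le_or_gt (S.inNorm u) (M * ‖x‖) with hsmall | hlarge
  · have hdecayed : ‖T (θ t u) x‖ ≤ ε := hρ _ (hτ t (le_of_max_le_left ht) u hu hsmall)
    linarith
  · have hθt := hθ₀ t (le_of_max_le_right ht) u hu
    linarith [(T (θ t u)).le_of_opNorm_le (hM _ hθt) x]

end Stability

def modulatedSystem [NormedSpace ℝ X] (p : ℝ≥0∞) (α : ℝ → ℝ) (hα₀ : ∀ a, 0 ≤ α a)
    (hloc : ∀ u : ℝ → ℝ, MemLp u p (volume.restrict (Ici 0)) →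
      LocallyIntegrableOn (fun s => α (u s)) (Ici 0))
    (T : ℝ → X →L[ℝ] X) (hT0 : T 0 = ContinuousLinearMap.id ℝ X)
    (hTsem : ∀ s t : ℝ, 0 ≤ s → 0 ≤ t → T (t + s) = (T t).comp (T s))
    (hTcont : ∀ x : X, ContinuousOn (fun t => T t x) (Ici 0)) : DynSysWithInputs X ℝ where
  inputs := {u | MemLp u p (volume.restrict (Ici 0))}
  inputs_nonempty := ⟨_, MemLp.zero'⟩
  inNorm u := (eLpNorm u p (volume.restrict (Ici 0))).toReal
  inNorm_nonneg _ _ := ENNReal.toReal_nonneg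
  flow t x u := T (∫ s in (0:ℝ)..t, α (u s)) x
  shift_mem _ hu _ hτ := MemLp.comp_add_right_Ici hu hτ
  shift_norm_le _ hu _ hτ :=
    ENNReal.toReal_mono (MemLp.eLpNorm_ne_top hu) (eLpNorm_comp_add_right_Ici_le hu.1 hτ)
  concat_mem _ h₁ _ h₂ τ _ := MemLp.concat_Ici h₁ h₂ τ
  flow_zero x _ _ := by simp [hT0]
  cocycle x u hu s t hs ht := by
    have hsplit : ∫ r in (0:ℝ)..t + s, α (u r)
        = (∫ r in (0:ℝ)..t, α (u (r + s))) + ∫ r in (0:ℝ)..s, α (u r) := by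
      have h₁ := (hloc u hu).intervalIntegrable_of_nonneg le_rfl hs
      have h₂ := (hloc u hu).intervalIntegrable_of_nonneg hs (by positivity : 0 ≤ t + s)
      rw [intervalIntegral.integral_comp_add_right (fun r => α (u r)), zero_add,
        ← intervalIntegral.integral_add_adjacent_intervals h₁ h₂]
      exact add_comm _ _
    rw [hsplit, hTsem _ _ (intervalIntegral.integral_nonneg hs fun _ _ => hα₀ _)
      (intervalIntegral.integral_nonneg ht fun _ _ => hα₀ _)]
    rfl
  flow_continuous x u hu := (hTcont x).comp (hloc u hu).continuousOn_primitive_Ici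
    fun _ ht => intervalIntegral.integral_nonneg ht fun _ _ => hα₀ _
  causal x u₁ _ u₂ _ τ _ heq t ht := by
    congr 2
    refine intervalIntegral.integral_congr fun s hs => ?_
    rw [uIcc_of_le ht.1] at hs
    simp only [heq s ⟨hs.1, hs.2.trans ht.2⟩]

/-- **Proposition 4.1.** Let `X ≠ {0}` be a Banach space, `p ∈ [1,∞]`,
`𝒰 = L^p([0,∞),ℝ)` with the `L^p`-norm, `(T_t)` a `C₀`-semigroup on `X`, and `α : ℝ → [0,∞)`
continuous with `α ∘ u` locally integrable for every `u ∈ 𝒰`. Then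
`φ(t,x₀,u) = T_{∫₀^t α(u(s)) ds} x₀` defines a dynamical system with inputs which is weakly
input-to-state stable if and only if it is strongly input-to-state stable. -/
theorem modulated_linear_fullLp_weakISS_iff_strongISS
    [NormedSpace ℝ X] [CompleteSpace X] [Nontrivial X]
    (p : ℝ≥0∞) (hp : 1 ≤ p)
    (α : ℝ → ℝ) (hαcont : Continuous α) (hαnn : ∀ r : ℝ, 0 ≤ α r)
    (hloc : ∀ u : ℝ → ℝ, MemLp u p (volume.restrict (Ici (0:ℝ))) →
      LocallyIntegrableOn (fun s => α (u s)) (Ici (0:ℝ)) volume)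
    (T : ℝ → X →L[ℝ] X)
    (hT0 : T 0 = ContinuousLinearMap.id ℝ X)
    (hTsem : ∀ s t : ℝ, 0 ≤ s → 0 ≤ t → T (t + s) = (T t).comp (T s))
    (hTcont : ∀ x : X, ContinuousOn (fun t => T t x) (Ici 0)) :
    ∃ S : DynSysWithInputs X ℝ,
      S.inputs = {u : ℝ → ℝ | MemLp u p (volume.restrict (Ici (0:ℝ)))} ∧
      (∀ u : ℝ → ℝ, S.inNorm u = (eLpNorm u p (volume.restrict (Ici (0:ℝ)))).toReal) ∧
      (∀ (t : ℝ) (x₀ : X) (u : ℝ → ℝ), S.flow t x₀ u = T (∫ s in (0:ℝ)..t, α (u s)) x₀) ∧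
      (WeakISS S ↔ StrongISS S) := by
  set S := modulatedSystem p α hαnn hloc T hT0 hTsem hTcont
  refine ⟨S, rfl, fun _ => rfl, fun _ _ _ => rfl,
    fun ⟨hUGS, γ, hγ, hAG⟩ => ⟨hUGS, id, classKZero_id, ?_⟩, StrongISS.weakISS⟩
  have hconst : ∀ a t x, S.flow t x (fun _ => a) = T (t * α a) x := fun a t x => by
    simp [S, modulatedSystem]
  have hfix : ∀ a, α a = 0 → ∀ t x, S.flow t x (fun _ => a) = x := fun a ha t x => by
    rw [hconst, ha, mul_zero, hT0]
    rfl
  have hpos₀ : 0 < α 0 :=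
    (hαnn 0).lt_of_ne' fun h => hAG.not_forall_flow_eq_self MemLp.zero' (hfix 0 h)
  have hpos : p = ∞ → ∀ a, 0 < α a := fun hp a => (hαnn a).lt_of_ne' fun h =>
    hAG.not_forall_flow_eq_self (show MemLp _ p _ from hp ▸ memLp_top_const a) (hfix a h)
  have horbit : ∀ r x, T r x = S.flow (r / α 0) x (fun _ => 0) := fun r x => by
    rw [hconst, div_mul_cancel₀ r hpos₀.ne']
  obtain ⟨M, hM⟩ := exists_forall_opNorm_le_of_forall_norm_le (T := T) (s := Ici 0) fun x =>
    (hUGS.exists_forall_norm_flow_le MemLp.zero' x).imp fun _ hC r hr =>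
      horbit r x ▸ hC _ (div_nonneg hr hpos₀.le)
  have hdecay : ∀ x, Tendsto (fun r => T r x) atTop (𝓝 0) := fun x =>
    ((hAG.tendsto_flow_zero MemLp.zero' (by simp [S, modulatedSystem, hγ.map_zero]) x).comp
      (tendsto_id.atTop_div_const hpos₀)).congr fun r => (horbit r x).symm
  exact strongAGWith_id_of_flow_eq (fun _ _ _ => rfl)
    (fun t ht _ _ => intervalIntegral.integral_nonneg ht fun _ _ => hαnn _)
    (fun B R => eventually_le_intervalIntegral_comp (zero_lt_one.trans_le hp).ne' hαcont hαnn
      hpos₀ hpos hloc B R) hM hdecay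
end
end

section
/- Let X be a nontrivial Banach space, p ∈ [1,∞) ∪ {∞}, and 𝒰 := L^p([0,∞),ℝ) with ‖·‖_𝒰 = ‖·‖_{L^p}. Let (T_t)_{t≥0} be a C₀-semigroup on X and let α : ℝ → [0,∞) be a function such that α∘u is locally integrable for every u ∈ 𝒰, and define φ(t,x₀,u) := T_{∫₀^t α(u(s)) ds} x₀. If the system 𝔖 := (X,𝒰,φ) is of weak asymptotic gain, then α(0) > 0; and if moreover p = ∞, then α(r) > 0 for every r ∈ ℝ. -/
open MeasureTheory Filter Set Topology
open scoped ENNReal NNReal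

noncomputable section

variable {X U : Type*} [NormedAddCommGroup X]

/-! If `α r₀ = 0` and the constant input `r₀` is admissible, then `∫₀ᵗ α(r₀) ds = 0` for every `t`,
so `φ(t, x₀, r₀) = T₀ x₀ = x₀`: every state is an equilibrium. Weak asymptotic gain then bounds
`‖x₀‖` by `1 + γ̄(‖r₀‖_𝒰)` uniformly in `x₀`, which is impossible in a nontrivial normed space.
Constant inputs lie in `L^p(0,∞)` for `p = ∞`, and the zero input for every `p`. -/

theorem not_forall_norm_le {E : Type*} [NormedAddCommGroup E] [NormedSpace ℝ E] [Nontrivial E]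
    (C : ℝ) : ¬∀ x : E, ‖x‖ ≤ C :=
  fun h => NormedSpace.unbounded_univ ℝ E (isBounded_iff_forall_norm_le.2 ⟨C, fun x _ => h x⟩)

theorem pos_of_const_input_orbits_bounded [NormedSpace ℝ X] [Nontrivial X] {α : ℝ → ℝ}
    (hαnn : ∀ r, 0 ≤ α r) {T : ℝ → X →L[ℝ] X}
    (hT0 : T 0 = ContinuousLinearMap.id ℝ X) {r₀ C : ℝ}
    (hbdd : ∀ x₀ : X, ∃ t : ℝ, ‖T (∫ _ in (0:ℝ)..t, α r₀) x₀‖ ≤ C) : 0 < α r₀ := by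
  refine (hαnn r₀).lt_of_ne fun hα0 => not_forall_norm_le (E := X) C fun x₀ => ?_
  obtain ⟨t, ht⟩ := hbdd x₀
  simpa [← hα0, hT0] using ht

theorem modulated_linear_weakAG_implies_alpha_pos_general
    [NormedSpace ℝ X] [Nontrivial X]
    (p : ℝ≥0∞)
    (α : ℝ → ℝ) (hαnn : ∀ r : ℝ, 0 ≤ α r)
    (T : ℝ → X →L[ℝ] X)
    (hT0 : T 0 = ContinuousLinearMap.id ℝ X)
    (hWAG : ∃ γbar : ℝ → ℝ, ClassKZero γbar ∧
      ∀ ε : ℝ, 0 < ε → ∀ (x₀ : X), ∀ u : ℝ → ℝ,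
        MemLp u p (volume.restrict (Ici (0:ℝ))) →
        ∃ τ : ℝ, 0 ≤ τ ∧ ∀ t : ℝ, τ ≤ t →
          ‖T (∫ s in (0:ℝ)..t, α (u s)) x₀‖
            ≤ ε + γbar ((eLpNorm u p (volume.restrict (Ici (0:ℝ)))).toReal)) :
    0 < α 0 ∧ (p = ⊤ → ∀ r : ℝ, 0 < α r) := by
  obtain ⟨γbar, -, hW⟩ := hWAG
  have pos_of_memLp_const : ∀ r₀ : ℝ, MemLp (fun _ => r₀) p (volume.restrict (Ici (0:ℝ))) →
      0 < α r₀ := fun r₀ hmem => pos_of_const_input_orbits_bounded hαnn hT0 fun x₀ => by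
    obtain ⟨τ, -, hτ⟩ := hW 1 one_pos x₀ _ hmem
    exact ⟨τ, hτ τ le_rfl⟩
  exact ⟨pos_of_memLp_const 0 MemLp.zero',
    fun hp r => pos_of_memLp_const r (hp ▸ memLp_top_const r)⟩

/-- Let `X ≠ {0}` be a Banach space, `p ∈ [1,∞]`, `𝒰 = L^p([0,∞),ℝ)`,
`(T_t)` a `C₀`-semigroup on `X`, `α : ℝ → [0,∞)` with `α ∘ u` locally integrable for every
`u ∈ 𝒰`, and `φ(t,x₀,u) = T_{∫₀^t α(u(s)) ds} x₀`. If the system is of weak asymptotic gain,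
then `α 0 > 0`; and if moreover `p = ∞`, then `α r > 0` for every `r`. -/
theorem modulated_linear_weakAG_implies_alpha_pos
    [NormedSpace ℝ X] [Nontrivial X]
    (p : ℝ≥0∞) (hp : 1 ≤ p)
    (α : ℝ → ℝ) (hαnn : ∀ r : ℝ, 0 ≤ α r)
    (hloc : ∀ u : ℝ → ℝ, MemLp u p (volume.restrict (Ici (0:ℝ))) →
      LocallyIntegrableOn (fun s => α (u s)) (Ici (0:ℝ)) volume)
    (T : ℝ → X →L[ℝ] X)
    (hT0 : T 0 = ContinuousLinearMap.id ℝ X)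
    (hTsem : ∀ s t : ℝ, 0 ≤ s → 0 ≤ t → T (t + s) = (T t).comp (T s))
    (hTcont : ∀ x : X, ContinuousOn (fun t => T t x) (Ici 0))
    (hWAG : ∃ γbar : ℝ → ℝ, ClassKZero γbar ∧
      ∀ ε : ℝ, 0 < ε → ∀ (x₀ : X), ∀ u : ℝ → ℝ,
        MemLp u p (volume.restrict (Ici (0:ℝ))) →
        ∃ τ : ℝ, 0 ≤ τ ∧ ∀ t : ℝ, τ ≤ t →
          ‖T (∫ s in (0:ℝ)..t, α (u s)) x₀‖
            ≤ ε + γbar ((eLpNorm u p (volume.restrict (Ici (0:ℝ)))).toReal)) :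
    0 < α 0 ∧ (p = ⊤ → ∀ r : ℝ, 0 < α r) :=
  modulated_linear_weakAG_implies_alpha_pos_general p α hαnn T hT0 hWAG
end
end

section
/- Let p ∈ [1,∞) and let α : ℝ → [0,∞) be а function such that c_δ := inf_{|r| ≤ δ} α(r) > 0 for some δ > 0. Let v̄, r̄ ≥ 0 and set τ̄ := v̄/c_δ + r̄^p/δ^p. Then for every u ∈ L^p([0,∞),ℝ) with ‖u‖_{L^p} ≤ r̄ such that α∘u is measurable, one has ∫₀^{τ̄} α(u(s)) ds ≥ v̄. -/
open MeasureTheory Set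
open scoped ENNReal

/-!
By Chebyshev's inequality `u` has modulus at least `δ` on a set of measure at most
`r̄ ^ p / δ ^ p`, so on `[0, τ̄]` it stays inside the ball of radius `δ` on a set of measure at
least `v̄ / c`. There `α ∘ u ≥ c`, whence the integral is at least `c · v̄ / c = v̄`.
-/

theorem meas_norm_ge_le_of_eLpNorm_le {X E : Type*} [MeasurableSpace X] {μ : Measure X}
    [NormedAddCommGroup E] {f : X → E} (hf : AEStronglyMeasurable f μ) {p δ r : ℝ}
    (hp : 0 < p) (hδ : 0 < δ) (hr : 0 ≤ r)
    (hfr : eLpNorm f (ENNReal.ofReal p) μ ≤ ENNReal.ofReal r) :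
    μ {x | δ ≤ ‖f x‖} ≤ ENNReal.ofReal (r ^ p / δ ^ p) := by
  have hset : {x | δ ≤ ‖f x‖} = {x | ENNReal.ofReal δ ≤ ‖f x‖ₑ} := by
    ext x
    simp only [mem_ofPred_eq, ← ofReal_norm, ENNReal.ofReal_le_ofReal_iff (norm_nonneg _)]
  have hδp : ENNReal.ofReal δ ^ p ≠ 0 := by positivity
  rw [hset, ← ENNReal.mul_le_mul_iff_right hδp (by finiteness)]
  calc ENNReal.ofReal δ ^ p * μ {x | ENNReal.ofReal δ ≤ ‖f x‖ₑ}
      ≤ eLpNorm f (ENNReal.ofReal p) μ ^ p := by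
        have := mul_meas_ge_le_pow_eLpNorm' μ (by simpa using hp) ENNReal.ofReal_ne_top hf
          (ENNReal.ofReal δ)
        rwa [ENNReal.toReal_ofReal hp.le] at this
    _ ≤ ENNReal.ofReal r ^ p := by gcongr
    _ = ENNReal.ofReal δ ^ p * ENNReal.ofReal (r ^ p / δ ^ p) := by
        rw [ENNReal.ofReal_rpow_of_nonneg hr hp.le, ENNReal.ofReal_rpow_of_nonneg hδ.le hp.le,
          ← ENNReal.ofReal_mul (by positivity), mul_div_cancel₀ _ (by positivity)]

theorem mul_measure_preimage_le_lintegral_comp {X Y : Type*} [MeasurableSpace X]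
    [MeasurableSpace Y] {μ : Measure X} {f : X → Y} (hf : AEMeasurable f μ) {t : Set Y}
    (ht : MeasurableSet t) {φ : Y → ℝ≥0∞} {c : ℝ≥0∞} (hφ : ∀ y ∈ t, c ≤ φ y) :
    c * μ (f ⁻¹' t) ≤ ∫⁻ x, φ (f x) ∂μ :=
  calc c * μ (f ⁻¹' t) = c * μ (hf.mk f ⁻¹' t) := by
        rw [measure_congr (hf.ae_eq_mk.preimage t)]
    _ = ∫⁻ x, (hf.mk f ⁻¹' t).indicator (fun _ ↦ c) x ∂μ := by
        rw [lintegral_indicator_const (hf.measurable_mk ht)]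
    _ ≤ ∫⁻ x, φ (hf.mk f x) ∂μ := by
        refine lintegral_mono fun x ↦ ?_
        by_cases hx : x ∈ hf.mk f ⁻¹' t
        · simpa [hx] using hφ _ hx
        · simp [hx]
    _ = ∫⁻ x, φ (f x) ∂μ := lintegral_congr_ae (hf.ae_eq_mk.fun_comp φ).symm

theorem measure_le_restrict_preimage_ball_add {X E : Type*} [MeasurableSpace X] {μ : Measure X}
    [NormedAddCommGroup E] (f : X → E) (δ : ℝ) {s S : Set X} (hs : MeasurableSet s)
    (hS : MeasurableSet S) (hsS : s ⊆ S) :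
    μ s ≤ μ.restrict s (f ⁻¹' Metric.ball 0 δ) + μ.restrict S {x | δ ≤ ‖f x‖} := by
  rw [Measure.restrict_apply' hs, Measure.restrict_apply' hS, inter_comm]
  refine (measure_le_inter_add_sdiff μ s _).trans (add_le_add_right (measure_mono ?_) _)
  rintro x ⟨hxs, hxδ⟩
  exact ⟨by simpa using hxδ, hsS hxs⟩

theorem lp_lower_integral_bound_general
    (p : ℝ) (hp : 1 ≤ p)
    (α : ℝ → ℝ) (hαnn : ∀ r : ℝ, 0 ≤ α r)
    (δ : ℝ) (hδ : 0 < δ)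
    (c : ℝ) (hc : c = sInf (α '' {r : ℝ | |r| ≤ δ})) (hcpos : 0 < c)
    (v r : ℝ) (hv : 0 ≤ v) (hr : 0 ≤ r)
    (u : ℝ → ℝ)
    (hu : MemLp u (ENNReal.ofReal p) (volume.restrict (Ici (0:ℝ))))
    (hu_norm : (eLpNorm u (ENNReal.ofReal p) (volume.restrict (Ici (0:ℝ)))).toReal ≤ r) :
    ENNReal.ofReal v
      ≤ ∫⁻ s in Icc (0:ℝ) (v / c + r ^ p / δ ^ p), ENNReal.ofReal (α (u s)) := by
  set τ := v / c + r ^ p / δ ^ p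
  set good := u ⁻¹' Metric.ball 0 δ
  have hbad : volume.restrict (Ici 0) {s | δ ≤ ‖u s‖} ≤ ENNReal.ofReal (r ^ p / δ ^ p) :=
    meas_norm_ge_le_of_eLpNorm_le hu.aestronglyMeasurable (by linarith) hδ hr
      ((ENNReal.le_ofReal_iff_toReal_le hu.eLpNorm_ne_top hr).2 hu_norm)
  have hgood : ENNReal.ofReal (v / c) ≤ volume.restrict (Icc 0 τ) good := by
    refine (ENNReal.add_le_add_iff_right (ENNReal.ofReal_ne_top (r := r ^ p / δ ^ p))).1 ?_
    calc ENNReal.ofReal (v / c) + ENNReal.ofReal (r ^ p / δ ^ p)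
        = volume (Icc 0 τ) := by
          rw [Real.volume_Icc, sub_zero, ENNReal.ofReal_add (by positivity) (by positivity)]
      _ ≤ _ := measure_le_restrict_preimage_ball_add u δ measurableSet_Icc measurableSet_Ici
          Icc_subset_Ici_self
      _ ≤ _ := by gcongr
  have hαc : ∀ y ∈ Metric.ball (0 : ℝ) δ, ENNReal.ofReal c ≤ ENNReal.ofReal (α y) := by
    intro y hy
    refine ENNReal.ofReal_le_ofReal (hc ▸ csInf_le ⟨0, ?_⟩ ⟨y, ?_, rfl⟩)
    · rintro _ ⟨z, -, rfl⟩
      exact hαnn z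
    · simpa using (mem_ball_zero_iff.1 hy).le
  have hu_Icc : AEMeasurable u (volume.restrict (Icc 0 τ)) :=
    hu.aestronglyMeasurable.aemeasurable.mono_measure
      (Measure.restrict_mono Icc_subset_Ici_self le_rfl)
  calc ENNReal.ofReal v = ENNReal.ofReal c * ENNReal.ofReal (v / c) := by
        rw [← ENNReal.ofReal_mul hcpos.le, mul_div_cancel₀ v hcpos.ne']
    _ ≤ ENNReal.ofReal c * volume.restrict (Icc 0 τ) good := by gcongr
    _ ≤ _ := mul_measure_preimage_le_lintegral_comp hu_Icc Metric.isOpen_ball.measurableSet hαc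

/-- **third step of Proposition 4.1, case `p < ∞`.** Let `p ∈ [1,∞)` and let
`α : ℝ → [0,∞)` be such that `c := inf_{|r| ≤ δ} α(r) > 0` for some `δ > 0`. Let `v̄, r̄ ≥ 0`
and `τ̄ := v̄/c + r̄^p/δ^p`. Then every `u ∈ L^p([0,∞),ℝ)` with `‖u‖_{L^p} ≤ r̄` and `α ∘ u`
measurable satisfies `∫₀^{τ̄} α(u(s)) ds ≥ v̄`. -/
theorem lp_lower_integral_bound
    (p : ℝ) (hp : 1 ≤ p)
    (α : ℝ → ℝ) (hαnn : ∀ r : ℝ, 0 ≤ α r)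
    (δ : ℝ) (hδ : 0 < δ)
    (c : ℝ) (hc : c = sInf (α '' {r : ℝ | |r| ≤ δ})) (hcpos : 0 < c)
    (v r : ℝ) (hv : 0 ≤ v) (hr : 0 ≤ r)
    (u : ℝ → ℝ)
    (hu : MemLp u (ENNReal.ofReal p) (volume.restrict (Ici (0:ℝ))))
    (hu_norm : (eLpNorm u (ENNReal.ofReal p) (volume.restrict (Ici (0:ℝ)))).toReal ≤ r)
    (hmeas : AEMeasurable (fun s => α (u s)) (volume.restrict (Ici (0:ℝ)))) :
    ENNReal.ofReal v
      ≤ ∫⁻ s in Icc (0:ℝ) (v / c + r ^ p / δ ^ p), ENNReal.ofReal (α (u s)) :=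
  lp_lower_integral_bound_general p hp α hαnn δ hδ c hc hcpos v r hv hr u hu hu_norm
end

section
/- Let X be a Banach space, let (T_t)_{t≥0} be a strongly stable C₀-semigroup on X with M := sup_{v ≥ 0} ‖T_v‖ < ∞, let α : ℝ → [0,∞), and let 𝒰 be a set of measurable functions u : [0,∞) → ℝ with a norm ‖·‖_𝒰 such that α∘u is locally integrable for every u ∈ 𝒰. Suppose that for every v̄, r̄ ≥ 0 there exists τ̄_{v̄,r̄} ≥ 0 such that ∫₀^{τ̄_{v̄,r̄}} α(u(s)) ds ≥ v̄ for every u ∈ 𝒰 with ‖u‖_𝒰 ≤ r̄. Define φ(t,x₀,u) := T_{∫₀^t α(u(s)) ds} x₀. Then the system 𝔖 := (X,𝒰,φ) is of strong asymptotic gain γ̄ with γ̄(r) := M·r: for every ε > 0 and x₀ ∈ X there exists τ(ε,x₀) ≥ 0 such that ‖φ(t,x₀,u)‖ ≤ ε + M·‖u‖_𝒰 for all t ≥ τ(ε,x₀) and all u ∈ 𝒰. -/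
open MeasureTheory Filter Set Topology

/-
Write `V = ∫₀ᵗ α(u(s)) ds ≥ 0`. Given `ε` and `x₀`, strong stability gives `v̄` with
`‖T_v x₀‖ ≤ ε` for `v ≥ v̄`, and the hypothesis on `𝒰` gives a time `τ` after which every input of
norm at most `‖x₀‖` has accumulated `V ≥ v̄`. For `t ≥ τ`, an input with `N u ≤ ‖x₀‖` therefore
gives `‖T_V x₀‖ ≤ ε`, while an input with `N u > ‖x₀‖` gives `‖T_V x₀‖ ≤ M‖x₀‖ ≤ M · N u`.
-/

theorem exists_nonneg_forall_norm_le_of_tendsto_zero {E : Type*} [SeminormedAddCommGroup E]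
    {f : ℝ → E} (hf : Tendsto f atTop (𝓝 0)) {ε : ℝ} (hε : 0 < ε) :
    ∃ v₀ : ℝ, 0 ≤ v₀ ∧ ∀ v, v₀ ≤ v → ‖f v‖ ≤ ε := by
  obtain ⟨v₀, hv₀⟩ := (hf.eventually (Metric.closedBall_mem_nhds 0 hε)).exists_forall_of_atTop
  refine ⟨max v₀ 0, le_max_right _ _, fun v hv => ?_⟩
  simpa using hv₀ v ((le_max_left _ _).trans hv)

theorem MeasureTheory.LocallyIntegrableOn.intervalIntegrable_of_Ici {E : Type*} [NormedAddCommGroup E]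
    {f : ℝ → E} {a b : ℝ} (hf : LocallyIntegrableOn f (Ici a)) (hab : a ≤ b) :
    IntervalIntegrable f volume a b := by
  rw [intervalIntegrable_iff_integrableOn_Ioc_of_le hab]
  exact (hf.integrableOn_compact_subset Icc_subset_Ici_self isCompact_Icc).mono_set
    Ioc_subset_Icc_self

theorem intervalIntegral_mono_upper_of_nonneg {f : ℝ → ℝ} (hf : ∀ s, 0 ≤ f s)
    (hloc : LocallyIntegrableOn f (Ici 0)) {b c : ℝ} (hb : 0 ≤ b) (hbc : b ≤ c) :
    ∫ s in (0 : ℝ)..b, f s ≤ ∫ s in (0 : ℝ)..c, f s :=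
  intervalIntegral.integral_mono_interval le_rfl hb hbc (Eventually.of_forall hf)
    (hloc.intervalIntegrable_of_Ici (hb.trans hbc))

theorem modulated_linear_strongAG_general
    {X : Type*} [NormedAddCommGroup X] [NormedSpace ℝ X]
    (T : ℝ → X →L[ℝ] X)
    (hTstab : ∀ x : X, Tendsto (fun v : ℝ => T v x) atTop (nhds 0))
    (M : ℝ) (hM : ∀ v : ℝ, 0 ≤ v → ‖T v‖ ≤ M)
    (α : ℝ → ℝ) (hαnn : ∀ r : ℝ, 0 ≤ α r)
    (𝒰 : Set (ℝ → ℝ))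
    (N : (ℝ → ℝ) → ℝ) (hN : ∀ u ∈ 𝒰, 0 ≤ N u)
    (hloc : ∀ u ∈ 𝒰, LocallyIntegrableOn (fun s => α (u s)) (Set.Ici (0:ℝ)) volume)
    (hτ : ∀ vbar rbar : ℝ, 0 ≤ vbar → 0 ≤ rbar → ∃ τ : ℝ, 0 ≤ τ ∧
      ∀ u ∈ 𝒰, N u ≤ rbar → vbar ≤ ∫ s in (0:ℝ)..τ, α (u s)) :
    ∀ ε : ℝ, 0 < ε → ∀ x₀ : X, ∃ τ : ℝ, 0 ≤ τ ∧
      ∀ t : ℝ, τ ≤ t → ∀ u ∈ 𝒰,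
        ‖T (∫ s in (0:ℝ)..t, α (u s)) x₀‖ ≤ ε + M * N u := by
  intro ε hε x₀
  obtain ⟨vbar, hvbar0, hvbar⟩ := exists_nonneg_forall_norm_le_of_tendsto_zero (hTstab x₀) hε
  obtain ⟨τ, hτ0, hτvbar⟩ := hτ vbar ‖x₀‖ hvbar0 (norm_nonneg x₀)
  refine ⟨τ, hτ0, fun t ht u hu => ?_⟩
  have hM0 : 0 ≤ M := (norm_nonneg _).trans (hM 0 le_rfl)
  rcases le_or_gt (N u) ‖x₀‖ with hsmall | hlarge
  · have hV : vbar ≤ ∫ s in (0:ℝ)..t, α (u s) := (hτvbar u hu hsmall).trans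
      (intervalIntegral_mono_upper_of_nonneg (fun s => hαnn (u s)) (hloc u hu) hτ0 ht)
    linarith [hvbar _ hV, mul_nonneg hM0 (hN u hu)]
  · have hV0 : 0 ≤ ∫ s in (0:ℝ)..t, α (u s) :=
      intervalIntegral.integral_nonneg (hτ0.trans ht) fun s _ => hαnn (u s)
    calc ‖T (∫ s in (0:ℝ)..t, α (u s)) x₀‖ ≤ M * ‖x₀‖ := (T _).le_of_opNorm_le (hM _ hV0) x₀
      _ ≤ M * N u := mul_le_mul_of_nonneg_left hlarge.le hM0
      _ ≤ ε + M * N u := by linarith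

/-- **fourth step of Proposition 4.1.** Let `(T_t)` be a strongly stable
`C₀`-semigroup on a Banach space `X` with `‖T_v‖ ≤ M` for all `v ≥ 0`, let `α : ℝ → [0,∞)`,
and let `𝒰` be a set of measurable inputs with a norm `N` such that `α ∘ u` is locally
integrable for every `u ∈ 𝒰` and such that for all `v̄, r̄ ≥ 0` there is a `τ̄ ≥ 0` with
`∫₀^{τ̄} α(u(s)) ds ≥ v̄` for every `u ∈ 𝒰` with `N u ≤ r̄`. Then
`φ(t,x₀,u) := T_{∫₀^t α(u(s)) ds} x₀` is of strong asymptotic gain `r ↦ M·r`. -/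
theorem modulated_linear_strongAG
    {X : Type*} [NormedAddCommGroup X] [NormedSpace ℝ X]
    (T : ℝ → X →L[ℝ] X)
    (hT0 : T 0 = ContinuousLinearMap.id ℝ X)
    (hTsem : ∀ s t : ℝ, 0 ≤ s → 0 ≤ t → T (t + s) = (T t).comp (T s))
    (hTcont : ∀ x : X, ContinuousOn (fun t => T t x) (Set.Ici 0))
    (hTstab : ∀ x : X, Tendsto (fun v : ℝ => T v x) atTop (nhds 0))
    (M : ℝ) (hM : ∀ v : ℝ, 0 ≤ v → ‖T v‖ ≤ M)
    (α : ℝ → ℝ) (hαnn : ∀ r : ℝ, 0 ≤ α r)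
    (𝒰 : Set (ℝ → ℝ)) (h𝒰meas : ∀ u ∈ 𝒰, Measurable u)
    (N : (ℝ → ℝ) → ℝ) (hN : ∀ u ∈ 𝒰, 0 ≤ N u)
    (hloc : ∀ u ∈ 𝒰, LocallyIntegrableOn (fun s => α (u s)) (Set.Ici (0:ℝ)) volume)
    (hτ : ∀ vbar rbar : ℝ, 0 ≤ vbar → 0 ≤ rbar → ∃ τ : ℝ, 0 ≤ τ ∧
      ∀ u ∈ 𝒰, N u ≤ rbar → vbar ≤ ∫ s in (0:ℝ)..τ, α (u s)) :
    ∀ ε : ℝ, 0 < ε → ∀ x₀ : X, ∃ τ : ℝ, 0 ≤ τ ∧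
      ∀ t : ℝ, τ ≤ t → ∀ u ∈ 𝒰,
        ‖T (∫ s in (0:ℝ)..t, α (u s)) x₀‖ ≤ ε + M * N u :=
  modulated_linear_strongAG_general T hTstab M hM α hαnn 𝒰 N hN hloc hτ
end
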